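/- Define Φ(y) = ((−1)^{N/2}/(2 y^2 i)) [ (y + i/2) ∏_{j=1}^{2N}(y − i s_j) − (y − i/2) ∏_{j=1}^{2N}(y + i s_j) ]. Then, with x = y^2, x·Φ = (−1)^{N/2} [ Σ_{j=0}^{N−1} (−1)^j ((1/2) ς_{2j} − ς_{2j+1}) x^{N−j} + (1/2) ς_{2N} ], a polynomial of degree at most N in x. -/

import Mathlib

/-!
Expand both products in the elementary symmetric polynomials `ς_l` of the `s_j`: the term of
degree `l` picks up `(y + i/2)(-i)^l - (y - i/2) i^l`, which is `i (-1)^k` for `l = 2k` and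
`-2 i y (-1)^k` for `l = 2k + 1`. Hence degrees `2k` and `2k + 1` pair up into a multiple of
`y^(2N-2k) = x^(N-k)`, while the top degree `2N` leaves `i ς_{2N}` because `N` is even. The
bracket is thus `2 i` times a polynomial in `x`, and the prefactor `x / (2 x i)` cancels.
-/

open Complex Finset

lemma Finset.sum_range_two_mul_add_one {M : Type*} [AddCommMonoid M] (f : ℕ → M) (n : ℕ) :
    ∑ l ∈ range (2 * n + 1), f l = ∑ j ∈ range n, (f (2 * j) + f (2 * j + 1)) + f (2 * n) := by
  induction n with
  | zero => simp
  | succ n ih =>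
    rw [show 2 * (n + 1) + 1 = 2 * n + 1 + 1 + 1 by ring, sum_range_succ, sum_range_succ, ih,
      sum_range_succ, show 2 * n + 1 + 1 = 2 * (n + 1) by ring]
    abel

lemma Finset.prod_add_mul_eq_sum_esymm {R ι : Type*} [CommSemiring R] [Fintype ι]
    (s : ι → R) (y c : R) :
    ∏ j, (y + c * s j) =
      ∑ l ∈ range (Fintype.card ι + 1),
        c ^ l * (univ.val.map s).esymm l * y ^ (Fintype.card ι - l) := by
  classical
  simp_rw [add_comm y, esymm_map_val, mul_sum, sum_mul]
  rw [prod_add, sum_powerset, card_univ]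
  refine sum_congr rfl fun l _ => sum_congr rfl fun t ht => ?_
  rw [mem_powersetCard] at ht
  rw [prod_mul_distrib, prod_const, prod_const, card_sdiff_of_subset ht.1, card_univ, ht.2]

lemma Complex.I_half_combination_two_mul (y : ℂ) (k : ℕ) :
    (y + I / 2) * (-I) ^ (2 * k) - (y - I / 2) * I ^ (2 * k) = I * (-1) ^ k := by
  rw [pow_mul, pow_mul, neg_sq, I_sq]
  ring

lemma Complex.I_half_combination_two_mul_add_one (y : ℂ) (k : ℕ) :
    (y + I / 2) * (-I) ^ (2 * k + 1) - (y - I / 2) * I ^ (2 * k + 1) = -2 * I * y * (-1) ^ k := by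
  rw [pow_succ, pow_succ, pow_mul, pow_mul, neg_sq, I_sq]
  ring

lemma Complex.sub_prod_I_half_eq {ι : Type*} [Fintype ι] {n : ℕ} (hn : Even n)
    (hcard : Fintype.card ι = 2 * n) (s : ι → ℂ) (y : ℂ) :
    (y + I / 2) * ∏ j, (y - I * s j) - (y - I / 2) * ∏ j, (y + I * s j) =
      2 * I * (∑ j ∈ range n, (-1) ^ j * ((1 / 2 : ℂ) * (univ.val.map s).esymm (2 * j) -
        (univ.val.map s).esymm (2 * j + 1)) * (y ^ 2) ^ (n - j) +
        (1 / 2 : ℂ) * (univ.val.map s).esymm (2 * n)) := by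
  set e := (univ.val.map s).esymm
  have hminus : ∏ j, (y - I * s j) = ∏ j, (y + -I * s j) := by
    simp only [neg_mul, ← sub_eq_add_neg]
  rw [hminus, prod_add_mul_eq_sum_esymm, prod_add_mul_eq_sum_esymm, hcard, mul_sum, mul_sum,
    ← sum_sub_distrib, sum_range_two_mul_add_one, mul_add, mul_sum]
  congr 1
  · refine sum_congr rfl fun j hj => ?_
    have hX : y ^ (2 * n - 2 * j) = (y ^ 2) ^ (n - j) := by rw [← pow_mul, Nat.mul_sub]
    have hY : y ^ (2 * n - (2 * j + 1)) * y = (y ^ 2) ^ (n - j) := by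
      rw [← pow_succ, ← pow_mul]
      congr 1
      have := mem_range.mp hj
      omega
    rw [hX]
    linear_combination (e (2 * j) * (y ^ 2) ^ (n - j)) * I_half_combination_two_mul y j +
      (e (2 * j + 1) * y ^ (2 * n - (2 * j + 1))) * I_half_combination_two_mul_add_one y j -
      2 * I * (-1) ^ j * e (2 * j + 1) * hY
  · rw [Nat.sub_self, pow_zero]
    linear_combination e (2 * n) * I_half_combination_two_mul y n +
      I * e (2 * n) * hn.neg_one_pow (α := ℂ)

theorem xPhi_polynomial_in_x_general (N : ℕ) (hNe : Even N)
    (s : Fin (2 * N) → ℂ) (y : ℂ) (hy : y ≠ 0) :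
    let ς : ℕ → ℂ := fun l =>
      ∑ t ∈ Finset.powersetCard l (Finset.univ : Finset (Fin (2 * N))), ∏ i ∈ t, s i
    (y ^ 2) * (((-1 : ℂ) ^ (N / 2) / (2 * y ^ 2 * Complex.I)) *
        ((y + Complex.I / 2) * ∏ j, (y - Complex.I * s j) -
          (y - Complex.I / 2) * ∏ j, (y + Complex.I * s j))) =
      (-1 : ℂ) ^ (N / 2) *
        ((∑ j ∈ Finset.range N, (-1) ^ j *
            ((1 / 2 : ℂ) * ς (2 * j) - ς (2 * j + 1)) * (y ^ 2) ^ (N - j)) +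
          (1 / 2 : ℂ) * ς (2 * N)) := by
  intro ς
  rw [sub_prod_I_half_eq hNe (Fintype.card_fin _)]
  simp only [ς, esymm_map_val]
  field_simp

/-- With `Φ(y) = ((-1)^{N/2}/(2y²i))[(y+i/2)∏(y-is_j) − (y-i/2)∏(y+is_j)]` and `x = y²`:
`x·Φ = (-1)^{N/2}[Σ_{j<N} (-1)^j ((1/2)ς_{2j} − ς_{2j+1}) x^{N-j} + (1/2)ς_{2N}]`. -/
theorem xPhi_polynomial_in_x (N : ℕ) (hN : 0 < N) (hNe : Even N)
    (s : Fin (2 * N) → ℂ) (y : ℂ) (hy : y ≠ 0) :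
    let ς : ℕ → ℂ := fun l =>
      ∑ t ∈ Finset.powersetCard l (Finset.univ : Finset (Fin (2 * N))), ∏ i ∈ t, s i
    (y ^ 2) * (((-1 : ℂ) ^ (N / 2) / (2 * y ^ 2 * Complex.I)) *
        ((y + Complex.I / 2) * ∏ j, (y - Complex.I * s j) -
          (y - Complex.I / 2) * ∏ j, (y + Complex.I * s j))) =
      (-1 : ℂ) ^ (N / 2) *
        ((∑ j ∈ Finset.range N, (-1) ^ j *
            ((1 / 2 : ℂ) * ς (2 * j) - ς (2 * j + 1)) * (y ^ 2) ^ (N - j)) +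
          (1 / 2 : ℂ) * ς (2 * N)) :=
  xPhi_polynomial_in_x_general N hNe s y hy
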